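/- arXiv:1811.01764 — 2 statements merged into one kernel-verified Lean document; each statement's English description precedes it below -/
import Mathlib

section
/- Let d ≥ 2 and ω ∈ C¹(ℝ^d, ℝ) with ω(0) = 0, ∇ω(0) = 0, ω(v) > 0 and ∇ω(v) ≠ 0 for all v ≠ 0, and suppose that for every a ∈ ℝ the level set ω^{-1}({a}) is connected. Let g ∈ C¹(ℝ^d, ℝ) satisfy: for all v', v'' ∈ ℝ^d, ω(v') + ω(v'') = ω(v' + v'') implies g(v') + g(v'') = g(v' + v''). Then there exist b ∈ ℝ^d and c ∈ ℝ such that g(v) = b·v + c ω(v) for all v ∈ ℝ^d. -/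
/-!
Subtracting the linear map `dg(0)` we may assume `dg(0) = 0`. For `v ≠ 0` the function
`w ↦ g (v + w) - g w` is constant on the resonant hypersurface `{w | ω (v + w) - ω w = ω v}`, which
is regular at `w = 0` because its defining function has derivative `dω(v) - dω(0) = dω(v) ≠ 0`;
Lagrange multipliers give `dg(v) = c(v) • dω(v)`. Hence `g` is locally constant on the regular
level sets of `ω`, and constant on them by connectedness: `g = f ∘ ω`.

A connected piece of the resonant hypersurface through `0` carries all small values of `ω`, so
`f (a + t) = f a + f t` for `a` in the range of `ω` and small `t > 0`. As `ω` is a submersion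
off `0`, `f` is differentiable there, and `f' (a) = lim_{t → 0⁺} f t / t` is a constant `c`.
Thus `f a - c a` is constant on intervals `(0, b)` of the range, and the same limit forces it
to vanish.
-/

open Set Filter Topology

theorem tendsto_div_nhdsGT_deriv_of_eventually_add {f : ℝ → ℝ} {a : ℝ}
    (hf : DifferentiableAt ℝ f a) (hadd : ∀ᶠ t in 𝓝[>] 0, f (a + t) = f a + f t) :
    Tendsto (fun t => f t / t) (𝓝[>] 0) (𝓝 (deriv f a)) := by
  refine ((hasDerivAt_iff_tendsto_slope_zero.1 hf.hasDerivAt).mono_left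
    (nhdsGT_le_nhdsNE 0)).congr' ?_
  filter_upwards [hadd] with t ht
  rw [ht, smul_eq_mul, add_sub_cancel_left, inv_mul_eq_div]

theorem eqOn_mul_of_hasDerivAt_of_tendsto_div {f : ℝ → ℝ} {b c : ℝ}
    (hf : ∀ a ∈ Ioo 0 b, HasDerivAt f c a)
    (hlim : Tendsto (fun t => f t / t) (𝓝[>] 0) (𝓝 c)) : ∀ a ∈ Ioo 0 b, f a = c * a := by
  intro a ha
  obtain ⟨k, hk⟩ := isOpen_Ioo.exists_eq_add_of_deriv_eq isPreconnected_Ioo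
    (fun t ht => (hf t ht).differentiableAt.differentiableWithinAt)
    (differentiable_id.const_mul c).differentiableOn
    (fun t ht => by simp [(hf t ht).deriv])
  suffices k = 0 by simpa [this] using hk ha
  have hIoo : Ioo 0 b ∈ 𝓝[>] (0 : ℝ) := Ioo_mem_nhdsGT (ha.1.trans ha.2)
  have hto_k : Tendsto f (𝓝[>] 0) (𝓝 k) := by
    have hlin : Tendsto (fun t : ℝ => c * t + k) (𝓝 0) (𝓝 k) :=
      (by fun_prop : Continuous fun t : ℝ => c * t + k).tendsto' 0 k (by simp)
    exact (tendsto_nhdsWithin_of_tendsto_nhds hlin).congr'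
      (eventually_of_mem hIoo fun t ht => (hk ht).symm)
  have hto_0 : Tendsto f (𝓝[>] 0) (𝓝 0) := by
    have := (tendsto_nhdsWithin_of_tendsto_nhds tendsto_id).mul hlim
    rw [zero_mul] at this
    refine this.congr' ?_
    filter_upwards [self_mem_nhdsWithin] with t (ht : 0 < t)
    simp only [id]
    field_simp
  exact tendsto_nhds_unique hto_k hto_0

theorem exists_eq_mul_of_eventually_add {f : ℝ → ℝ} {A : Set ℝ} (hApos : A ⊆ Ioi 0)
    (hA : ∀ a ∈ A, ∃ b, a < b ∧ Ioo 0 b ⊆ A) (hdiff : ∀ a ∈ A, DifferentiableAt ℝ f a)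
    (hadd : ∀ a ∈ A, ∀ᶠ t in 𝓝[>] 0, f (a + t) = f a + f t) :
    ∃ c, ∀ a ∈ A, f a = c * a := by
  rcases A.eq_empty_or_nonempty with rfl | ⟨a₀, ha₀⟩
  · exact ⟨0, fun a ha => ha.elim⟩
  have hlim (a) (ha : a ∈ A) := tendsto_div_nhdsGT_deriv_of_eventually_add (hdiff a ha) (hadd a ha)
  have hderiv : ∀ a ∈ A, HasDerivAt f (deriv f a₀) a := fun a ha => by
    simpa [tendsto_nhds_unique (hlim a ha) (hlim a₀ ha₀)] using (hdiff a ha).hasDerivAt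
  refine ⟨deriv f a₀, fun a ha => ?_⟩
  obtain ⟨b, hab, hbA⟩ := hA a ha
  exact eqOn_mul_of_hasDerivAt_of_tendsto_div (fun t ht => hderiv t (hbA ht)) (hlim a₀ ha₀)
    a ⟨hApos ha, hab⟩

section

variable {E : Type*} [NormedAddCommGroup E] [NormedSpace ℝ E]

theorem ContinuousLinearMap.exists_apply_eq_one {L : E →L[ℝ] ℝ} (hL : L ≠ 0) :
    ∃ u, L u = 1 :=
  LinearMap.surjective (f := (L : E →ₗ[ℝ] ℝ)) (fun h => hL (coe_injective h)) 1

theorem Convex.apply_eq_of_hasFDerivWithinAt_smul {S : Set E} (hS : Convex ℝ S)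
    {L : E →L[ℝ] ℝ} {a : ℝ} (hSL : ∀ z ∈ S, L z = a) {f : E → ℝ}
    (hf : ∀ z ∈ S, ∃ c : ℝ, HasFDerivWithinAt f (c • L) S z) {y z : E} (hy : y ∈ S)
    (hz : z ∈ S) : f y = f z := by
  -- `c • L` and `0` are both derivatives of `f` within `S`, as `L` is constant on `S`.
  have hf0 : ∀ w ∈ S, HasFDerivWithinAt f (0 : E →L[ℝ] ℝ) S w := by
    intro w hw
    obtain ⟨c, hc⟩ := hf w hw
    have hcL : HasFDerivWithinAt (fun v => c * L v) (c • L) S w :=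
      (L.hasFDerivAt.const_mul c).hasFDerivWithinAt
    have hcL0 : HasFDerivWithinAt (fun v => c * L v) (0 : E →L[ℝ] ℝ) S w :=
      (hasFDerivWithinAt_const (c * a) w S).congr (fun v hv => by rw [hSL v hv])
        (by rw [hSL w hw])
    simpa using (hc.sub hcL).add hcL0
  have := hS.norm_image_sub_le_of_norm_hasFDerivWithin_le hf0 (C := 0) (by simp) hz hy
  rw [zero_mul, norm_le_zero_iff, sub_eq_zero] at this
  exact this

theorem differentiableAt_of_comp_of_hasStrictFDerivAt {f : ℝ → ℝ} {F : E → ℝ}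
    {F' : E →L[ℝ] ℝ} {x : E} (hF : HasStrictFDerivAt F F' x) (hF' : F' ≠ 0)
    (hfF : DifferentiableAt ℝ (f ∘ F) x) : DifferentiableAt ℝ f (F x) := by
  -- Near `F x`, `f = (f ∘ F) ∘ γ ∘ τ` with `τ` a local inverse of `F` along the line `γ`.
  obtain ⟨u, hu⟩ := F'.exists_apply_eq_one hF'
  set γ : ℝ → E := fun s => x + s • u
  have hγ0 : γ 0 = x := by simp [γ]
  have hFγ : HasStrictDerivAt (F ∘ γ) 1 0 := by
    rw [← hγ0] at hF
    simpa [hu] using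
      hF.comp_hasStrictDerivAt 0 (((hasStrictDerivAt_id 0).smul_const u).const_add x)
  set τ := hFγ.localInverse (F ∘ γ) 1 0 one_ne_zero
  have hτ : τ (F x) = 0 := by
    simpa [hγ0] using (hFγ.eventually_left_inverse one_ne_zero).self_of_nhds
  have hτ' : DifferentiableAt ℝ τ (F x) := by
    simpa [hγ0] using (hFγ.to_localInverse one_ne_zero).hasDerivAt.differentiableAt
  have hfτ : DifferentiableAt ℝ ((f ∘ F) ∘ γ ∘ τ) (F x) := by
    have hγτ : (γ ∘ τ) (F x) = x := by simp [γ, hτ]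
    exact (hγτ ▸ hfF).comp _ ((by fun_prop : Differentiable ℝ γ) _ |>.comp _ hτ')
  refine hfτ.congr_of_eventuallyEq ?_
  filter_upwards [show ∀ᶠ a in 𝓝 (F x), F (γ (τ a)) = a by
    simpa [hγ0] using hFγ.eventually_right_inverse one_ne_zero] with a ha
  simp only [Function.comp_apply, ha]

theorem ContDiff.hasStrictFDerivAt_add_sub {φ : E → ℝ} (hφ : ContDiff ℝ 1 φ) (v : E) :
    HasStrictFDerivAt (fun w => φ (v + w) - φ w) (fderiv ℝ φ v - fderiv ℝ φ 0) 0 := by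
  have hv : HasStrictFDerivAt φ (fderiv ℝ φ v) (v + 0) := by
    simpa using hφ.contDiffAt.hasStrictFDerivAt one_ne_zero
  have hshift : HasStrictFDerivAt (fun w => φ (v + w)) (fderiv ℝ φ v) 0 := by
    simpa using hv.comp 0 ((hasStrictFDerivAt_id 0).const_add v)
  exact hshift.sub (hφ.contDiffAt.hasStrictFDerivAt one_ne_zero)

theorem exists_lt_Ioo_subset_image_ne_zero {ω : E → ℝ} (hω : Continuous ω) (hω0 : ω 0 = 0)
    {v : E} (hv : fderiv ℝ ω v ≠ 0) : ∃ b, ω v < b ∧ Ioo 0 b ⊆ ω '' {w | w ≠ 0} := by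
  obtain ⟨x, hx⟩ : ∃ x, ω v < ω x := by
    by_contra! h
    exact hv (IsLocalMax.fderiv_eq_zero (Eventually.of_forall h))
  refine ⟨ω x, hx, fun a ha => ?_⟩
  obtain ⟨w, rfl⟩ :=
    (isPreconnected_range hω).Icc_subset ⟨0, hω0⟩ ⟨x, rfl⟩ (Ioo_subset_Icc_self ha)
  exact ⟨w, by rintro rfl; exact ha.1.ne' hω0, rfl⟩

variable [CompleteSpace E]

theorem exists_openPartialHomeomorph_eq_fderiv_comp {F : E → ℝ} (hF : ContDiff ℝ 1 F) {x : E}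
    (hx : fderiv ℝ F x ≠ 0) :
    ∃ Φ : OpenPartialHomeomorph E E, x ∈ Φ.source ∧ (∀ y, F y = fderiv ℝ F x (Φ y)) ∧
      ∀ z ∈ Φ.target, ContDiffAt ℝ 1 Φ.symm z := by
  set L := fderiv ℝ F x
  obtain ⟨u, hLu⟩ := L.exists_apply_eq_one hx
  -- `L ∘ Θ = F` because `L u = 1`, and `Θ' x = 1`.
  set Θ : E → E := fun y => y + (F y - L y) • u
  set T : E → E →L[ℝ] E := fun y => (fderiv ℝ F y - L).smulRight u
  have hΘ : ContDiff ℝ 1 Θ := contDiff_id.add ((hF.sub L.contDiff).smul contDiff_const)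
  have hΘ' (y : E) : HasFDerivAt Θ (1 + T y) y :=
    (hasFDerivAt_id y).add ((((hF.differentiable one_ne_zero) y).hasFDerivAt.sub
      L.hasFDerivAt).smul_const u)
  -- Neumann series: `Θ' y = 1 + T y` is invertible on the open set where `‖T y‖ < 1`.
  set W : Set E := {y | ‖-T y‖ < 1}
  have hW : IsOpen W := isOpen_lt (by fun_prop) continuous_const
  have hinv : ∀ y ∈ W, ∃ e : E ≃L[ℝ] E, (e : E →L[ℝ] E) = 1 + T y := fun y hy =>
    ⟨ContinuousLinearEquiv.unitsEquiv ℝ E (Units.oneSub _ hy), by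
      ext v; simp [Units.val_oneSub]⟩
  have hΘx : HasFDerivAt Θ ((ContinuousLinearEquiv.refl ℝ E : E ≃L[ℝ] E) : E →L[ℝ] E) x := by
    convert hΘ' x using 1
    simp only [ContinuousLinearEquiv.coe_refl, sub_self, ContinuousLinearMap.zero_smulRight,
      add_zero, T, L]
    rfl
  let Φ := (hΘ.contDiffAt.toOpenPartialHomeomorph Θ hΘx one_ne_zero).restrOpen W hW
  have hΦ : (Φ : E → E) = Θ := hΘ.contDiffAt.toOpenPartialHomeomorph_coe hΘx one_ne_zero
  refine ⟨Φ, ⟨hΘ.contDiffAt.mem_toOpenPartialHomeomorph_source hΘx one_ne_zero,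
    by simp [W, T, L]⟩, fun y => by simp [hΦ, Θ, hLu], fun z hz => ?_⟩
  obtain ⟨e, he⟩ := hinv _ (Φ.map_target hz).2
  exact Φ.contDiffAt_symm hz (by rw [hΦ, he]; exact hΘ' _) (by rw [hΦ]; exact hΘ.contDiffAt)

theorem eventually_apply_eq_of_fderiv_eq_smul {F h : E → ℝ} (hF : ContDiff ℝ 1 F)
    (hh : ContDiff ℝ 1 h) {x : E} (hx : fderiv ℝ F x ≠ 0)
    (hpar : ∀ y, F y = F x → ∃ c : ℝ, fderiv ℝ h y = c • fderiv ℝ F y) :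
    ∀ᶠ y in 𝓝 x, F y = F x → h y = h x := by
  obtain ⟨Φ, hxΦ, hFΦ, hΦsymm⟩ := exists_openPartialHomeomorph_eq_fderiv_comp hF hx
  set L := fderiv ℝ F x
  obtain ⟨r, hr, hball⟩ := Metric.isOpen_iff.1 Φ.open_target _ (Φ.map_source hxΦ)
  set S := Metric.ball (Φ x) r ∩ {z | L z = F x}
  have hS : Convex ℝ S := (convex_ball _ _).inter (convex_hyperplane L.toLinearMap.isLinear _)
  -- In the chart `Φ` the level set is the hyperplane `L = F x`, along which `h ∘ Φ.symm` has
  -- derivative `c • L = 0`.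
  have hderiv : ∀ z ∈ S, ∃ c : ℝ, HasFDerivWithinAt (h ∘ Φ.symm) (c • L) S z := by
    intro z hz
    have hzΦ := hball hz.1
    obtain ⟨c, hc⟩ := hpar (Φ.symm z) (by rw [hFΦ, Φ.right_inv hzΦ, hz.2])
    have hsymm := ((hΦsymm z hzΦ).differentiableAt one_ne_zero).hasFDerivAt
    have hFL : (fderiv ℝ F (Φ.symm z)).comp (fderiv ℝ Φ.symm z) = L := by
      refine ((hF.differentiable one_ne_zero _).hasFDerivAt.comp z hsymm).unique
        (L.hasFDerivAt.congr_of_eventuallyEq ?_)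
      filter_upwards [Φ.open_target.mem_nhds hzΦ] with w hw
      rw [Function.comp_apply, hFΦ, Φ.right_inv hw]
    refine ⟨c, ?_⟩
    have := (hh.differentiable one_ne_zero _).hasFDerivAt.comp z hsymm
    rw [hc, ContinuousLinearMap.smul_comp, hFL] at this
    exact this.hasFDerivWithinAt
  filter_upwards [Φ.open_source.mem_nhds hxΦ,
    (Φ.continuousAt hxΦ).preimage_mem_nhds (Metric.ball_mem_nhds _ hr)] with y hyΦ hyr hy
  have := hS.apply_eq_of_hasFDerivWithinAt_smul (fun z hz => hz.2) hderiv
    ⟨hyr, show L (Φ y) = F x by rw [← hFΦ, hy]⟩ ⟨Metric.mem_ball_self hr, (hFΦ x).symm⟩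
  simpa [Φ.left_inv hyΦ, Φ.left_inv hxΦ] using this

theorem IsPreconnected.apply_eq_of_fderiv_eq_smul {F h : E → ℝ} (hF : ContDiff ℝ 1 F)
    (hh : ContDiff ℝ 1 h) {a : ℝ} (hconn : IsPreconnected (F ⁻¹' {a}))
    (hreg : ∀ y ∈ F ⁻¹' {a}, fderiv ℝ F y ≠ 0)
    (hpar : ∀ y ∈ F ⁻¹' {a}, ∃ c : ℝ, fderiv ℝ h y = c • fderiv ℝ F y) {y z : E}
    (hy : y ∈ F ⁻¹' {a}) (hz : z ∈ F ⁻¹' {a}) : h y = h z := by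
  refine hconn.induction₂ (fun y z => h y = h z) (fun y hy => ?_) (fun _ _ _ _ _ _ => Eq.trans)
    (fun _ _ _ _ => Eq.symm) hy hz
  have hya : F y = a := hy
  filter_upwards [nhdsWithin_le_nhds (eventually_apply_eq_of_fderiv_eq_smul hF hh (hreg y hy)
    fun w hw => hpar w (hw.trans hya)), self_mem_nhdsWithin] with w hw hwa
  exact (hw (hwa.trans hya.symm)).symm

theorem exists_isPreconnected_nontrivial_subset_preimage {F : E → ℝ} (hF : ContDiff ℝ 1 F)
    {x e : E} (hx : fderiv ℝ F x ≠ 0) (he : e ≠ 0) (hxe : fderiv ℝ F x e = 0) :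
    ∃ C : Set E, IsPreconnected C ∧ x ∈ C ∧ C ⊆ F ⁻¹' {F x} ∧ C.Nontrivial := by
  obtain ⟨Φ, hxΦ, hFΦ, -⟩ := exists_openPartialHomeomorph_eq_fderiv_comp hF hx
  set L := fderiv ℝ F x
  obtain ⟨r, hr, hball⟩ := Metric.isOpen_iff.1 Φ.open_target _ (Φ.map_source hxΦ)
  set S := Metric.ball (Φ x) r ∩ {z | L z = F x}
  have hS : Convex ℝ S := (convex_ball _ _).inter (convex_hyperplane L.toLinearMap.isLinear _)
  have hSΦ : S ⊆ Φ.target := fun z hz => hball hz.1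
  have hxS : Φ x ∈ S := ⟨Metric.mem_ball_self hr, (hFΦ x).symm⟩
  obtain ⟨t, htr, ht0⟩ : ∃ t : ℝ, Φ x + t • e ∈ Metric.ball (Φ x) r ∧ t ≠ 0 := by
    have : Tendsto (fun t : ℝ => Φ x + t • e) (𝓝 0) (𝓝 (Φ x)) :=
      (by fun_prop : Continuous fun t : ℝ => Φ x + t • e).tendsto' 0 _ (by simp)
    have hnear : ∀ᶠ t in 𝓝[≠] (0 : ℝ), Φ x + t • e ∈ Metric.ball (Φ x) r :=
      nhdsWithin_le_nhds (this.eventually (Metric.ball_mem_nhds _ hr))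
    exact (hnear.and self_mem_nhdsWithin).exists
  have hteS : Φ x + t • e ∈ S :=
    ⟨htr, show L (Φ x + t • e) = F x by rw [map_add, map_smul, hxe, smul_zero, add_zero, ← hFΦ]⟩
  refine ⟨Φ.symm '' S, hS.isPreconnected.image _ (Φ.continuousOn_symm.mono hSΦ),
    ⟨Φ x, hxS, Φ.left_inv hxΦ⟩, ?_, ⟨_, mem_image_of_mem _ hxS, _, mem_image_of_mem _ hteS, ?_⟩⟩
  · rintro _ ⟨z, hz, rfl⟩
    rw [mem_preimage, mem_singleton_iff, hFΦ, Φ.right_inv (hSΦ hz), hz.2]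
  · intro h
    have := Φ.symm.injOn (hSΦ hxS) (hSΦ hteS) h
    simp [ht0, he] at this

theorem IsLocalExtrOn.exists_eq_smul_of_hasStrictFDerivAt {F φ : E → ℝ} {F' φ' : E →L[ℝ] ℝ}
    {x₀ : E} (hextr : IsLocalExtrOn φ {x | F x = F x₀} x₀) (hF : HasStrictFDerivAt F F' x₀)
    (hφ : HasStrictFDerivAt φ φ' x₀) (hF' : F' ≠ 0) : ∃ c : ℝ, φ' = c • F' := by
  obtain ⟨a, b, hab, h⟩ := hextr.exists_multipliers_of_hasStrictFDerivAt_1d hF hφ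
  have hb : b ≠ 0 := by
    rintro rfl
    simp_all
  refine ⟨-(a / b), ?_⟩
  rw [← inv_smul_smul₀ hb φ', eq_neg_of_add_eq_zero_right h]
  ext v
  simp only [smul_neg, neg_apply, smul_apply, smul_eq_mul, neg_mul, neg_inj]
  field_simp

end

def IsCollisionInvariant {E : Type*} [Add E] (ω g : E → ℝ) : Prop :=
  ∀ v w, ω v + ω w = ω (v + w) → g v + g w = g (v + w)

namespace IsCollisionInvariant

variable {E : Type*} {ω g : E → ℝ}

theorem apply_zero [AddZeroClass E] (hg : IsCollisionInvariant ω g) (hω0 : ω 0 = 0) :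
    g 0 = 0 := by
  simpa using hg 0 0 (by simp [hω0])

theorem sub [Add E] {k : E → ℝ} (hg : IsCollisionInvariant ω g) (hk : IsCollisionInvariant ω k) :
    IsCollisionInvariant ω (g - k) := fun v w h => by
  simp only [Pi.sub_apply]
  linarith [hg v w h, hk v w h]

variable [NormedAddCommGroup E] [NormedSpace ℝ E]

theorem exists_fderiv_sub_eq_smul [CompleteSpace E] (hg : IsCollisionInvariant ω g)
    (hω : ContDiff ℝ 1 ω) (hgC : ContDiff ℝ 1 g) (hω0 : ω 0 = 0) (hdω0 : fderiv ℝ ω 0 = 0)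
    {v : E} (hv : fderiv ℝ ω v ≠ 0) :
    ∃ c : ℝ, fderiv ℝ g v - fderiv ℝ g 0 = c • fderiv ℝ ω v := by
  -- `w ↦ g (v + w) - g w` is constant on the set of `w` resonating with `v`.
  have hextr : IsLocalExtrOn (fun w => g (v + w) - g w) {w | ω (v + w) - ω w = ω (v + 0) - ω 0}
      0 := by
    refine Or.inl (eventually_nhdsWithin_of_forall fun w (hw : _ = _) => le_of_eq ?_)
    show g (v + 0) - g 0 = g (v + w) - g w
    rw [add_zero, hω0, sub_zero] at hw
    have := hg v w (by linarith)
    rw [add_zero, hg.apply_zero hω0]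
    linarith
  simpa [hdω0] using hextr.exists_eq_smul_of_hasStrictFDerivAt (hω.hasStrictFDerivAt_add_sub v)
    (hgC.hasStrictFDerivAt_add_sub v) (by rwa [hdω0, sub_zero])

theorem factorsThrough [CompleteSpace E] (hg : IsCollisionInvariant ω g) (hω : ContDiff ℝ 1 ω)
    (hgC : ContDiff ℝ 1 g) (hω0 : ω 0 = 0) (hdω0 : fderiv ℝ ω 0 = 0)
    (hωpos : ∀ v, v ≠ 0 → 0 < ω v) (hdω : ∀ v, v ≠ 0 → fderiv ℝ ω v ≠ 0)
    (hconn : ∀ a, IsPreconnected (ω ⁻¹' {a})) (hdg0 : fderiv ℝ g 0 = 0) :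
    g.FactorsThrough ω := by
  have hpar (v : E) (hv : v ≠ 0) : ∃ c : ℝ, fderiv ℝ g v = c • fderiv ℝ ω v := by
    simpa [hdg0] using hg.exists_fderiv_sub_eq_smul hω hgC hω0 hdω0 (hdω v hv)
  have hne (v w : E) (h : ω v = ω w) (hv : v ≠ 0) : w ≠ 0 := by
    rintro rfl
    exact (hωpos v hv).ne' (h.trans hω0)
  intro v w hvw
  rcases eq_or_ne v 0 with rfl | hv
  · obtain rfl : w = 0 := by_contra fun hw => hne w 0 hvw.symm hw rfl
    rfl
  · exact (hconn (ω v)).apply_eq_of_fderiv_eq_smul hω hgC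
      (fun y hy => hdω y (hne v y hy.symm hv)) (fun y hy => hpar y (hne v y hy.symm hv))
      rfl hvw.symm

variable [FiniteDimensional ℝ E]

theorem eventually_add_of_comp_eq (hg : IsCollisionInvariant ω g)
    (hdim : 1 < Module.finrank ℝ E) (hω : ContDiff ℝ 1 ω) (hω0 : ω 0 = 0)
    (hdω0 : fderiv ℝ ω 0 = 0) (hωpos : ∀ v, v ≠ 0 → 0 < ω v) {f : ℝ → ℝ}
    (hf : ∀ v, f (ω v) = g v) {v : E} (hv : fderiv ℝ ω v ≠ 0) :
    ∀ᶠ t in 𝓝[>] 0, f (ω v + t) = f (ω v) + f t := by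
  have hF' : fderiv ℝ (fun w => ω (v + w) - ω w) 0 = fderiv ℝ ω v := by
    simpa [hdω0] using (hω.hasStrictFDerivAt_add_sub v).hasFDerivAt.fderiv
  obtain ⟨e, hev, he⟩ : ∃ e ∈ LinearMap.ker (fderiv ℝ ω v : E →ₗ[ℝ] ℝ), e ≠ 0 :=
    (Submodule.ne_bot_iff _).1 (LinearMap.ker_ne_bot_of_finrank_lt (by rwa [Module.finrank_self]))
  obtain ⟨C, hC, h0C, hCres, hCnt⟩ := exists_isPreconnected_nontrivial_subset_preimage
    ((hω.comp (contDiff_const.add contDiff_id)).sub hω) (hF' ▸ hv) he (hF' ▸ hev)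
  have hres : ∀ w ∈ C, ω v + ω w = ω (v + w) := fun w hw => by
    have : ω (v + w) - ω w = ω (v + 0) - ω 0 := hCres hw
    rw [add_zero, hω0, sub_zero] at this
    linarith
  obtain ⟨w₁, hw₁C, hw₁⟩ := hCnt.exists_ne 0
  have hIcc : Icc 0 (ω w₁) ⊆ ω '' C :=
    (hC.image _ hω.continuous.continuousOn).Icc_subset ⟨0, h0C, hω0⟩ ⟨w₁, hw₁C, rfl⟩
  filter_upwards [Ioo_mem_nhdsGT (hωpos w₁ hw₁)] with t ht
  obtain ⟨w, hwC, rfl⟩ := hIcc (Ioo_subset_Icc_self ht)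
  rw [hres w hwC, hf, hf, hf, hg v w (hres w hwC)]

theorem exists_eq_mul_of_fderiv_zero (hg : IsCollisionInvariant ω g)
    (hdim : 1 < Module.finrank ℝ E) (hω : ContDiff ℝ 1 ω) (hgC : ContDiff ℝ 1 g)
    (hω0 : ω 0 = 0) (hdω0 : fderiv ℝ ω 0 = 0) (hωpos : ∀ v, v ≠ 0 → 0 < ω v)
    (hdω : ∀ v, v ≠ 0 → fderiv ℝ ω v ≠ 0) (hconn : ∀ a, IsPreconnected (ω ⁻¹' {a}))
    (hdg0 : fderiv ℝ g 0 = 0) : ∃ c : ℝ, ∀ v, g v = c * ω v := by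
  set f := Function.extend ω g 0
  have hf : ∀ v, f (ω v) = g v :=
    (hg.factorsThrough hω hgC hω0 hdω0 hωpos hdω hconn hdg0).extend_apply 0
  obtain ⟨c, hc⟩ := exists_eq_mul_of_eventually_add (f := f) (A := ω '' {v | v ≠ 0})
    (by rintro _ ⟨v, hv, rfl⟩; exact hωpos v hv)
    (by
      rintro _ ⟨v, hv, rfl⟩
      exact exists_lt_Ioo_subset_image_ne_zero hω.continuous hω0 (hdω v hv))
    (by
      rintro _ ⟨v, hv, rfl⟩
      refine differentiableAt_of_comp_of_hasStrictFDerivAt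
        (hω.contDiffAt.hasStrictFDerivAt one_ne_zero) (hdω v hv) ?_
      rw [show f ∘ ω = g from funext hf]
      exact hgC.differentiable one_ne_zero v)
    (by
      rintro _ ⟨v, hv, rfl⟩
      exact hg.eventually_add_of_comp_eq hdim hω hω0 hdω0 hωpos hf (hdω v hv))
  refine ⟨c, fun v => ?_⟩
  rcases eq_or_ne v 0 with rfl | hv
  · simp [hg.apply_zero hω0, hω0]
  · rw [← hf, hc _ ⟨v, hv, rfl⟩]

theorem exists_eq_add_mul (hg : IsCollisionInvariant ω g) (hdim : 1 < Module.finrank ℝ E)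
    (hω : ContDiff ℝ 1 ω) (hgC : ContDiff ℝ 1 g) (hω0 : ω 0 = 0) (hdω0 : fderiv ℝ ω 0 = 0)
    (hωpos : ∀ v, v ≠ 0 → 0 < ω v) (hdω : ∀ v, v ≠ 0 → fderiv ℝ ω v ≠ 0)
    (hconn : ∀ a, IsPreconnected (ω ⁻¹' {a})) :
    ∃ (B : E →L[ℝ] ℝ) (c : ℝ), ∀ v, g v = B v + c * ω v := by
  set B := fderiv ℝ g 0
  have hB : IsCollisionInvariant ω B := fun v w _ => (map_add B v w).symm
  have hdh0 : fderiv ℝ (g - ⇑B) 0 = 0 :=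
    ((hgC.differentiable one_ne_zero 0).hasFDerivAt.sub B.hasFDerivAt).fderiv.trans (sub_self _)
  obtain ⟨c, hc⟩ := (hg.sub hB).exists_eq_mul_of_fderiv_zero hdim hω (hgC.sub B.contDiff) hω0
    hdω0 hωpos hdω hconn hdh0
  exact ⟨B, c, fun v => by linarith [hc v, show (g - ⇑B) v = g v - B v from rfl]⟩

end IsCollisionInvariant

theorem stmt_13 (d : ℕ) (hd : 2 ≤ d) (ω g : (Fin d → ℝ) → ℝ)
    (hω : ContDiff ℝ 1 ω) (hg : ContDiff ℝ 1 g)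
    (hω0 : ω 0 = 0) (hdω0 : fderiv ℝ ω 0 = 0)
    (hωpos : ∀ v : Fin d → ℝ, v ≠ 0 → 0 < ω v)
    (hdω : ∀ v : Fin d → ℝ, v ≠ 0 → fderiv ℝ ω v ≠ 0)
    (hconn : ∀ a : ℝ, IsPreconnected (ω ⁻¹' {a}))
    (hcoll : ∀ v w : Fin d → ℝ, ω v + ω w = ω (v + w) → g v + g w = g (v + w)) :
    ∃ (b : Fin d → ℝ) (c : ℝ), ∀ v : Fin d → ℝ,
      g v = (∑ k, b k * v k) + c * ω v := by
  obtain ⟨B, c, hBc⟩ := IsCollisionInvariant.exists_eq_add_mul hcoll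
    (by rwa [Module.finrank_fin_fun]) hω hg hω0 hdω0 hωpos hdω hconn
  refine ⟨fun k => B fun j => if k = j then 1 else 0, c, fun v => ?_⟩
  have hB := (B : (Fin d → ℝ) →ₗ[ℝ] ℝ).pi_apply_eq_sum_univ v
  simp only [ContinuousLinearMap.coe_coe, smul_eq_mul] at hB
  simp [hBc v, hB, mul_comm]
end

section
/- Let d ≥ 2 and ω ∈ C¹(ℝ^d, ℝ) with ω(0) = 0, ∇ω(0) = 0 and ∇ω(v) ≠ 0 for all v ≠ 0. For every v̄ ∈ ℝ^d \ {0}, there exist a bounded neighborhood U ⊂ ℝ^d \ {0} of v̄, a neighborhood V ⊂ ℝ^{d-1} of 0, and ψ ∈ C¹(ℝ^d × ℝ^{d-1}, ℝ^d) such that for all v ∈ U, σ ∈ V: ψ(v,0) = 0, ω(v) + ω(ψ(v,σ)) = ω(v + ψ(v,σ)), and rank(D_σψ(v,0)) = d − 1. -/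
/-!
With `Ψ(v, z) = ω(v + z) - ω v - ω z` we have `Ψ(v, 0) = 0` and
`∂_z Ψ(v̄, 0) = ∇ω(v̄) - ∇ω(0) = ∇ω(v̄) ≠ 0`. Write `z = e(σ, t)` for a linear isomorphism
`e : ℝ^{d-1} × ℝ ≃ ℝ^d` in which `t` is the `∇ω(v̄)`-component. The implicit function theorem
solves `Ψ(v, e(σ, t)) = 0` by a `C¹` function `t = τ(v, σ)`; its uniqueness part gives
`τ(v, 0) = 0`, and `σ` can be read back off `ψ(v, σ) = e(σ, τ(v, σ))`, so `D_σ ψ(v, 0)` is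
injective. A bump function turns the local solution into a globally `C¹` map.
-/

open Filter Topology Metric Module

theorem ContinuousLinearMap.exists_equiv_prod_apply_eq_snd {𝕜 E K : Type*}
    [NontriviallyNormedField 𝕜] [CompleteSpace 𝕜]
    [NormedAddCommGroup E] [NormedSpace 𝕜 E] [FiniteDimensional 𝕜 E]
    [NormedAddCommGroup K] [NormedSpace 𝕜 K] [FiniteDimensional 𝕜 K]
    {ℓ : E →L[𝕜] 𝕜} (hℓ : ℓ ≠ 0) (hK : finrank 𝕜 K + 1 = finrank 𝕜 E) :
    ∃ e : (K × 𝕜) ≃L[𝕜] E, ∀ p, ℓ (e p) = p.2 := by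
  have hℓ' : (ℓ : E →ₗ[𝕜] 𝕜) ≠ 0 := fun h => hℓ (ContinuousLinearMap.coe_injective h)
  obtain ⟨u, hu⟩ : ∃ u, ℓ u = 1 := LinearMap.surjective hℓ' 1
  have hker := Module.Dual.finrank_ker_add_one_of_ne_zero hℓ'
  let j : K ≃ₗ[𝕜] LinearMap.ker (ℓ : E →ₗ[𝕜] 𝕜) := LinearEquiv.ofFinrankEq _ _ (by omega)
  let f : K × 𝕜 →ₗ[𝕜] E := (LinearMap.ker (ℓ : E →ₗ[𝕜] 𝕜)).subtype ∘ₗ j.toLinearMap ∘ₗ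
      LinearMap.fst 𝕜 K 𝕜 + (LinearMap.snd 𝕜 K 𝕜).smulRight u
  have hf : ∀ p, ℓ (f p) = p.2 := fun p => by
    have : ℓ (j p.1) = 0 := (j p.1).2
    simp [f, this, hu]
  have hinj : Function.Injective f := by
    rw [← LinearMap.ker_eq_bot, LinearMap.ker_eq_bot']
    rintro ⟨σ, t⟩ h
    obtain rfl : t = 0 := by simpa [h] using (hf (σ, t)).symm
    simpa [f] using h
  have hdim : finrank 𝕜 (K × 𝕜) = finrank 𝕜 E := by simp [Module.finrank_prod, hK]
  exact ⟨(f.linearEquivOfInjective hinj hdim).toContinuousLinearEquiv, hf⟩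

theorem ContDiffAt.exists_contDiff_eventuallyEq {E F : Type*}
    [NormedAddCommGroup E] [NormedSpace ℝ E] [HasContDiffBump E]
    [NormedAddCommGroup F] [NormedSpace ℝ F] {f : E → F} {x : E} {n : ℕ}
    (hf : ContDiffAt ℝ n f x) : ∃ g : E → F, ContDiff ℝ n g ∧ g =ᶠ[𝓝 x] f := by
  obtain ⟨ε, hε, hball⟩ := eventually_nhds_iff_ball.1 (hf.eventually (by simp))
  let χ : ContDiffBump x := ⟨ε / 3, ε / 2, by positivity, by linarith⟩
  refine ⟨fun y => χ y • f y, contDiff_iff_contDiffAt.2 fun y => ?_, ?_⟩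
  · by_cases hy : y ∈ tsupport χ
    · rw [χ.tsupport_eq] at hy
      have hyε : y ∈ ball x ε := closedBall_subset_ball (by simp [χ]; linarith) hy
      exact χ.contDiff.contDiffAt.smul (hball y hyε)
    · refine (contDiffAt_const (c := (0 : F))).congr_of_eventuallyEq ?_
      filter_upwards [(isClosed_tsupport _).isOpen_compl.mem_nhds hy] with z hz
      simp [image_eq_zero_of_notMem_tsupport hz]
  · filter_upwards [closedBall_mem_nhds x (by positivity : 0 < ε / 3)] with y hy
    rw [χ.one_of_mem_closedBall hy, one_smul]

theorem injective_fderiv_of_eventually_leftInverse {𝕜 K E : Type*} [NontriviallyNormedField 𝕜]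
    [NormedAddCommGroup K] [NormedSpace 𝕜 K] [NormedAddCommGroup E] [NormedSpace 𝕜 E]
    {g : K → E} {π : E →L[𝕜] K} {x : K} (hg : DifferentiableAt 𝕜 g x)
    (hπ : ∀ᶠ y in 𝓝 x, π (g y) = y) :
    Function.Injective (fderiv 𝕜 g x) := by
  have hid : π ∘L fderiv 𝕜 g x = ContinuousLinearMap.id 𝕜 K :=
    (π.hasFDerivAt.comp x hg.hasFDerivAt).unique ((hasFDerivAt_id x).congr_of_eventuallyEq hπ)
  intro a b hab
  simpa [← ContinuousLinearMap.comp_apply, hid] using congr(π $hab)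

theorem ContDiffAt.exists_implicit_param {𝕜 E₁ E K : Type*} [RCLike 𝕜]
    [NormedAddCommGroup E₁] [NormedSpace 𝕜 E₁] [CompleteSpace E₁]
    [NormedAddCommGroup E] [NormedSpace 𝕜 E]
    [NormedAddCommGroup K] [NormedSpace 𝕜 K] [CompleteSpace K]
    {g : E₁ × E → 𝕜} {x₀ : E₁} {n : WithTop ℕ∞}
    (hg : ContDiffAt 𝕜 n g (x₀, 0)) (hn : n ≠ 0) (e : (K × 𝕜) ≃L[𝕜] E)
    (he : ∀ p, (fderiv 𝕜 g (x₀, 0) ∘L .inr 𝕜 E₁ E) (e p) = p.2) :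
    ∃ τ : E₁ × K → 𝕜, ContDiffAt 𝕜 n τ (x₀, 0) ∧
      (∀ᶠ p in 𝓝 (x₀, 0), g (p.1, e (p.2, τ p)) = g (x₀, 0)) ∧
      ∀ᶠ x in 𝓝 x₀, g (x, 0) = g (x₀, 0) → τ (x, 0) = 0 := by
  let A : ((E₁ × K) × 𝕜) ≃L[𝕜] E₁ × E :=
    (ContinuousLinearEquiv.prodAssoc 𝕜 E₁ K 𝕜).trans
      ((ContinuousLinearEquiv.refl 𝕜 E₁).prodCongr e)
  set u : (E₁ × K) × 𝕜 := ((x₀, 0), 0)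
  have hAu : A u = (x₀, 0) := by simp [A, u]
  have hf : ContDiffAt 𝕜 n (g ∘ A) u := (hAu ▸ hg).comp u A.contDiff.contDiffAt
  have hpartial : fderiv 𝕜 (g ∘ A) u ∘L .inr 𝕜 (E₁ × K) 𝕜 = .id 𝕜 𝕜 := by
    refine ContinuousLinearMap.ext_ring ?_
    simpa [A.comp_right_fderiv, hAu, A] using he (0, 1)
  have hinv : (fderiv 𝕜 (g ∘ A) u ∘L .inr 𝕜 (E₁ × K) 𝕜).IsInvertible := by
    rw [hpartial]
    exact ContinuousLinearMap.isInvertible_equiv (f := .refl 𝕜 𝕜)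
  refine ⟨hf.implicitFunction hn hinv, hf.contDiffAt_implicitFunction hn hinv, ?_, ?_⟩
  · simpa [hAu, A] using hf.eventually_apply_implicitFunction hn hinv
  · have ht : Tendsto (fun x : E₁ => ((x, (0 : K)), (0 : 𝕜))) (𝓝 x₀) (𝓝 u) :=
      (by fun_prop : Continuous fun x : E₁ => ((x, (0 : K)), (0 : 𝕜))).tendsto x₀
    filter_upwards [ht.eventually (hf.eventually_apply_eq_iff_implicitFunction hn hinv)] with x hx
    simpa [hAu, A, ← Prod.zero_eq_mk] using hx.1

def resonanceDefect {E F : Type*} [AddCommGroup E] [AddCommGroup F] (ω : E → F) (p : E × E) :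
    F :=
  ω (p.1 + p.2) - ω p.1 - ω p.2

section resonanceDefect

variable {𝕜 E F : Type*} [NontriviallyNormedField 𝕜] [NormedAddCommGroup E] [NormedSpace 𝕜 E]
  [NormedAddCommGroup F] [NormedSpace 𝕜 F] {ω : E → F}

theorem resonanceDefect_eq_zero_iff {p : E × E} :
    resonanceDefect ω p = 0 ↔ ω p.1 + ω p.2 = ω (p.1 + p.2) := by
  rw [resonanceDefect, sub_sub, sub_eq_zero, eq_comm]

theorem resonanceDefect_apply_zero_right (hω : ω 0 = 0) (v : E) :
    resonanceDefect ω (v, 0) = 0 := by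
  simp [resonanceDefect, hω]

theorem ContDiff.resonanceDefect {n : WithTop ℕ∞} (hω : ContDiff 𝕜 n ω) :
    ContDiff 𝕜 n (resonanceDefect ω) := by
  unfold _root_.resonanceDefect
  fun_prop

theorem fderiv_resonanceDefect_comp_inr (hω : Differentiable 𝕜 ω) (v z : E) :
    fderiv 𝕜 (resonanceDefect ω) (v, z) ∘L .inr 𝕜 E E =
      fderiv 𝕜 ω (v + z) - fderiv 𝕜 ω z := by
  have hdiff : DifferentiableAt 𝕜 (resonanceDefect ω) (v, z) := by
    unfold resonanceDefect
    fun_prop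
  have hslice : HasFDerivAt (fun z' => ω (v + z') - ω v - ω z')
      (fderiv 𝕜 ω (v + z) - fderiv 𝕜 ω z) z := by
    refine ((((hω (v + z)).hasFDerivAt.comp z ((hasFDerivAt_id z).const_add v)).sub_const
      (ω v)).sub (hω z).hasFDerivAt).congr_fderiv ?_
    simp
  exact (hdiff.hasFDerivAt.comp z (hasFDerivAt_prodMk_right v z)).unique hslice

end resonanceDefect

theorem exists_contDiff_resonance_param {E K : Type*}
    [NormedAddCommGroup E] [NormedSpace ℝ E] [FiniteDimensional ℝ E]
    [NormedAddCommGroup K] [NormedSpace ℝ K] [FiniteDimensional ℝ K]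
    (hK : finrank ℝ K + 1 = finrank ℝ E) {ω : E → ℝ} (hω : ContDiff ℝ 1 ω) (hω0 : ω 0 = 0)
    (hdω0 : fderiv ℝ ω 0 = 0) {v₀ : E} (hdωv₀ : fderiv ℝ ω v₀ ≠ 0) :
    ∃ ψ : E × K → E, ContDiff ℝ 1 ψ ∧ ∀ᶠ p in 𝓝 (v₀, 0),
      ω p.1 + ω (ψ p) = ω (p.1 + ψ p) ∧ ψ (p.1, 0) = 0 ∧
        Function.Injective (fderiv ℝ (fun σ => ψ (p.1, σ)) 0) := by
  obtain ⟨e, he⟩ := (fderiv ℝ ω v₀).exists_equiv_prod_apply_eq_snd hdωv₀ hK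
  have hpartial : fderiv ℝ (resonanceDefect ω) (v₀, 0) ∘L .inr ℝ E E = fderiv ℝ ω v₀ := by
    rw [fderiv_resonanceDefect_comp_inr (hω.differentiable one_ne_zero), add_zero, hdω0,
      sub_zero]
  obtain ⟨τ, hτ, hres, hτ0⟩ :=
    hω.resonanceDefect.contDiffAt.exists_implicit_param one_ne_zero e (hpartial ▸ he)
  simp only [resonanceDefect_apply_zero_right hω0, forall_const] at hres hτ0
  obtain ⟨ψ, hψ, hψτ⟩ := (e.contDiff.contDiffAt.comp _ (contDiffAt_snd.prodMk hτ) :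
    ContDiffAt ℝ 1 (fun p => e (p.2, τ p)) (v₀, 0)).exists_contDiff_eventuallyEq
  have hslice : ∀ᶠ v in 𝓝 v₀, τ (v, 0) = 0 ∧ ∀ᶠ q in 𝓝 (v, 0), ψ q = e (q.2, τ q) :=
    hτ0.and (((Continuous.prodMk_left 0).tendsto v₀).eventually hψτ.eventually_nhds)
  refine ⟨ψ, hψ, ?_⟩
  filter_upwards [hψτ, hres, hslice.prod_inl_nhds 0] with ⟨v, σ⟩ hψvσ hresvσ ⟨hτv, hψv⟩
  refine ⟨hψvσ ▸ resonanceDefect_eq_zero_iff.1 hresvσ, by simp [hψv.self_of_nhds, hτv], ?_⟩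
  have hdiff : DifferentiableAt ℝ (fun σ => ψ (v, σ)) 0 :=
    (hψ.differentiable one_ne_zero _).comp 0
      ((differentiableAt_const v).prodMk differentiableAt_id)
  refine injective_fderiv_of_eventually_leftInverse (π := .fst ℝ K ℝ ∘L (e.symm : E →L[ℝ] K × ℝ))
    hdiff ?_
  filter_upwards [((Continuous.prodMk_right v).tendsto 0).eventually hψv] with σ hσ
  simp [hσ]

theorem stmt_14_general (d : ℕ) (ω : (Fin d → ℝ) → ℝ)
    (hω : ContDiff ℝ 1 ω) (hω0 : ω 0 = 0) (hdω0 : fderiv ℝ ω 0 = 0)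
    (hdω : ∀ v : Fin d → ℝ, v ≠ 0 → fderiv ℝ ω v ≠ 0)
    (v₀ : Fin d → ℝ) (hv₀ : v₀ ≠ 0) :
    ∃ (U : Set (Fin d → ℝ)) (V : Set (Fin (d - 1) → ℝ))
      (ψ : (Fin d → ℝ) → (Fin (d - 1) → ℝ) → (Fin d → ℝ)),
      IsOpen U ∧ v₀ ∈ U ∧ Bornology.IsBounded U ∧ U ⊆ {v : Fin d → ℝ | v ≠ 0} ∧
      IsOpen V ∧ (0 : Fin (d - 1) → ℝ) ∈ V ∧
      ContDiff ℝ 1 (fun p : (Fin d → ℝ) × (Fin (d - 1) → ℝ) => ψ p.1 p.2) ∧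
      (∀ v ∈ U, ψ v 0 = 0 ∧
        ∀ σ ∈ V, ω v + ω (ψ v σ) = ω (v + ψ v σ)) ∧
      (∀ v ∈ U,
        LinearMap.rank
          ((fderiv ℝ (fun σ => ψ v σ) 0 : (Fin (d - 1) → ℝ) →L[ℝ] (Fin d → ℝ)) :
            (Fin (d - 1) → ℝ) →ₗ[ℝ] (Fin d → ℝ)) = ((d - 1 : ℕ) : Cardinal)) := by
  have hdim : finrank ℝ (Fin (d - 1) → ℝ) + 1 = finrank ℝ (Fin d → ℝ) := by
    have : d ≠ 0 := by rintro rfl; exact hv₀ (Subsingleton.elim _ _)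
    simp only [finrank_fin_fun]
    omega
  obtain ⟨ψ, hψ, hψv₀⟩ := exists_contDiff_resonance_param hdim hω hω0 hdω0 (hdω v₀ hv₀)
  obtain ⟨r, hr, hball⟩ :=
    eventually_nhds_iff_ball.1 (hψv₀.and ((eventually_ne_nhds hv₀).prod_inl_nhds 0))
  have hmem : ∀ v ∈ ball v₀ r, ∀ σ ∈ ball (0 : Fin (d - 1) → ℝ) r, (v, σ) ∈ ball (v₀, 0) r :=
    fun v hv σ hσ => ball_prod_same v₀ (0 : Fin (d - 1) → ℝ) r ▸ ⟨hv, hσ⟩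
  have hslice : ∀ v ∈ ball v₀ r, (v, (0 : Fin (d - 1) → ℝ)) ∈ ball (v₀, 0) r :=
    fun v hv => hmem v hv 0 (mem_ball_self hr)
  refine ⟨ball v₀ r, ball 0 r, fun v σ => ψ (v, σ), isOpen_ball, mem_ball_self hr, isBounded_ball,
    fun v hv => (hball _ (hslice v hv)).2, isOpen_ball, mem_ball_self hr, hψ,
    fun v hv => ⟨(hball _ (hslice v hv)).1.2.1, fun σ hσ => (hball _ (hmem v hv σ hσ)).1.1⟩,
    fun v hv => ?_⟩
  rw [LinearMap.rank, rank_range_of_injective _ (hball _ (hslice v hv)).1.2.2, rank_fin_fun]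

theorem stmt_14 (d : ℕ) (hd : 2 ≤ d) (ω : (Fin d → ℝ) → ℝ)
    (hω : ContDiff ℝ 1 ω) (hω0 : ω 0 = 0) (hdω0 : fderiv ℝ ω 0 = 0)
    (hdω : ∀ v : Fin d → ℝ, v ≠ 0 → fderiv ℝ ω v ≠ 0)
    (v₀ : Fin d → ℝ) (hv₀ : v₀ ≠ 0) :
    ∃ (U : Set (Fin d → ℝ)) (V : Set (Fin (d - 1) → ℝ))
      (ψ : (Fin d → ℝ) → (Fin (d - 1) → ℝ) → (Fin d → ℝ)),
      IsOpen U ∧ v₀ ∈ U ∧ Bornology.IsBounded U ∧ U ⊆ {v : Fin d → ℝ | v ≠ 0} ∧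
      IsOpen V ∧ (0 : Fin (d - 1) → ℝ) ∈ V ∧
      ContDiff ℝ 1 (fun p : (Fin d → ℝ) × (Fin (d - 1) → ℝ) => ψ p.1 p.2) ∧
      (∀ v ∈ U, ψ v 0 = 0 ∧
        ∀ σ ∈ V, ω v + ω (ψ v σ) = ω (v + ψ v σ)) ∧
      (∀ v ∈ U,
        LinearMap.rank
          ((fderiv ℝ (fun σ => ψ v σ) 0 : (Fin (d - 1) → ℝ) →L[ℝ] (Fin d → ℝ)) :
            (Fin (d - 1) → ℝ) →ₗ[ℝ] (Fin d → ℝ)) = ((d - 1 : ℕ) : Cardinal)) :=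
  stmt_14_general d ω hω hω0 hdω0 hdω v₀ hv₀
end
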